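/- arXiv:2006.04977 — 8 statements merged into one kernel-verified Lean document; each statement's English description precedes it below -/
import Mathlib

section
/- If F and G are formal power series with zero constant term satisfying F = z*G/(1-G) and G = z/(1-F), then F(z) = z^2 * M(z), where M is the Motzkin generating function. -/
open PowerSeries

/-!
Clearing denominators turns the system into `F (1 - G) = z G` and `G (1 - F) = z`, and
eliminating `G` gives `F = z² + z F + F²`, the equation that `z² M` satisfies as well.
Two solutions `P`, `Q` with zero constant term satisfy `(P - Q) (1 - z - P - Q) = 0`, and the
second factor has constant term `1`, hence is a unit.
-/

namespace PowerSeries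

variable {R : Type*} [CommRing R]

theorem eq_of_eq_X_sq_add_X_mul_add_sq {P Q : R⟦X⟧} (hP0 : constantCoeff P = 0)
    (hQ0 : constantCoeff Q = 0) (hP : P = X ^ 2 + X * P + P ^ 2)
    (hQ : Q = X ^ 2 + X * Q + Q ^ 2) : P = Q := by
  have hunit : IsUnit (1 - X - P - Q) := by
    simp [isUnit_iff_constantCoeff, hP0, hQ0]
  have hprod : (P - Q) * (1 - X - P - Q) = 0 := by
    linear_combination hP - hQ
  exact sub_eq_zero.mp (hunit.mul_left_eq_zero.mp hprod)

theorem eq_X_sq_add_X_mul_add_sq_of_system {F G : R⟦X⟧} (hF : F * (1 - G) = X * G)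
    (hG : G * (1 - F) = X) : F = X ^ 2 + X * F + F ^ 2 := by
  linear_combination (1 - F) * hF + (X + F) * hG

end PowerSeries

theorem F_eq_zsq_motzkin_general
    (F G M : PowerSeries ℚ)
    (hF0 : constantCoeff F = 0) (hG0 : constantCoeff G = 0)
    (hF : F = X * G * (1 - G)⁻¹)
    (hG : G = X * (1 - F)⁻¹)
    (hM : M = 1 + X * M + X ^ 2 * M ^ 2) :
    F = X ^ 2 * M := by
  have hF' : F * (1 - G) = X * G := (eq_mul_inv_iff_mul_eq (by simp [hG0])).mp hF
  have hG' : G * (1 - F) = X := (eq_mul_inv_iff_mul_eq (by simp [hF0])).mp hG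
  exact eq_of_eq_X_sq_add_X_mul_add_sq hF0 (by simp)
    (eq_X_sq_add_X_mul_add_sq_of_system hF' hG') (by linear_combination (X ^ 2 : ℚ⟦X⟧) * hM)

/-- If `F`, `G` are formal power series with zero constant term satisfying
`F = z·G/(1-G)` and `G = z/(1-F)`, then `F = z²·M(z)` where `M` is the Motzkin
generating function (the unique series with constant term 1 and `M = 1 + zM + z²M²`). -/
theorem F_eq_zsq_motzkin
    (F G M : PowerSeries ℚ)
    (hF0 : constantCoeff F = 0) (hG0 : constantCoeff G = 0)
    (hF : F = X * G * (1 - G)⁻¹)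
    (hG : G = X * (1 - F)⁻¹)
    (hM0 : constantCoeff M = 1)
    (hM : M = 1 + X * M + X ^ 2 * M ^ 2) :
    F = X ^ 2 * M :=
  F_eq_zsq_motzkin_general F G M hF0 hG0 hF hG hM
end

section
/- Under the substitution z = v/(1 + v + v^2), the Motzkin generating function satisfies M(z) = 1 + v + v^2 as an identity of formal power series in v. -/
/-!
Composition with a series of zero constant term is substitution, a ring homomorphism, so
`Y = M(a)` with `a = v/(1+v+v²)` satisfies `Y = 1 + aY + a²Y²`. Since `a(1+v+v²) = v`, the
series `S = 1+v+v²` satisfies the same equation. Subtracting gives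
`(Y - S)(1 - a - a²(Y + S)) = 0`, and the second factor has constant term `1`, hence is a unit.
-/

open PowerSeries

/-- Composition `f(a)` of formal power series, for `a` with zero constant term:
the `n`-th coefficient only depends on the truncation of `f` below degree `n+1`. -/
noncomputable def PowerSeries.comp (f a : PowerSeries ℚ) : PowerSeries ℚ :=
  PowerSeries.mk fun n => coeff n (Polynomial.aeval a (trunc (n + 1) f))

namespace PowerSeries

theorem coeff_pow_eq_zero_of_lt {R : Type*} [CommSemiring R] {a : R⟦X⟧}
    (ha : constantCoeff a = 0) {n d : ℕ} (h : n < d) : coeff n (a ^ d) = 0 :=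
  coeff_of_lt_order n <| (Nat.cast_lt.mpr h).trans_le (le_order_pow_of_constantCoeff_eq_zero d ha)

theorem comp_eq_subst {a : ℚ⟦X⟧} (ha : constantCoeff a = 0) (f : ℚ⟦X⟧) :
    comp f a = subst a f := by
  ext n
  rw [comp, coeff_mk, coeff_subst' (.of_constantCoeff_zero' ha),
    finsum_eq_sum_of_support_subset (s := Finset.range (n + 1)), Polynomial.aeval_def,
    eval₂_trunc_eq_sum_range, map_sum]
  · simp [coeff_C_mul]
  · intro d hd
    contrapose! hd
    simp [coeff_pow_eq_zero_of_lt ha (by simpa using hd)]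

theorem eq_of_eq_one_add_mul_add_sq_mul_sq {R : Type*} [CommRing R] {a Y S : R⟦X⟧}
    (ha : constantCoeff a = 0) (hY : Y = 1 + a * Y + a ^ 2 * Y ^ 2)
    (hS : S = 1 + a * S + a ^ 2 * S ^ 2) : Y = S := by
  have hunit : IsUnit (1 - a - a ^ 2 * (Y + S)) := by
    simp [isUnit_iff_constantCoeff, ha]
  have hfactor : (Y - S) * (1 - a - a ^ 2 * (Y + S)) = 0 := by
    linear_combination hY - hS
  exact sub_eq_zero.mp (hunit.mul_left_eq_zero.mp hfactor)

end PowerSeries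

theorem motzkin_subst_general
    (M : PowerSeries ℚ)
    (hM : M = 1 + X * M + X ^ 2 * M ^ 2) :
    PowerSeries.comp M (X * (1 + X + X ^ 2)⁻¹) = 1 + X + X ^ 2 := by
  set S : ℚ⟦X⟧ := 1 + X + X ^ 2
  set a := X * S⁻¹
  have ha : constantCoeff a = 0 := by simp [a]
  have haS : a * S = X := by
    rw [mul_assoc, PowerSeries.inv_mul_cancel _ (by simp [S]), mul_one]
  have hsubst : HasSubst a := .of_constantCoeff_zero' ha
  rw [comp_eq_subst ha]
  refine eq_of_eq_one_add_mul_add_sq_mul_sq ha ?_ ?_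
  · conv_lhs => rw [hM]
    simp only [← coe_substAlgHom hsubst, map_add, map_mul, map_pow, map_one, substAlgHom_X]
  · linear_combination (-(1 + a * S + X)) * haS

/-- Under the substitution `z = v/(1+v+v²)`, the Motzkin generating function satisfies
`M(z) = 1 + v + v²` as formal power series in `v`. -/
theorem motzkin_subst
    (M : PowerSeries ℚ)
    (hM0 : constantCoeff M = 1)
    (hM : M = 1 + X * M + X ^ 2 * M ^ 2) :
    PowerSeries.comp M (X * (1 + X + X ^ 2)⁻¹) = 1 + X + X ^ 2 :=
  motzkin_subst_general M hM
end

section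
/- Define the sequence of rational functions G_1 = z and G_{k+1} = z / (1 - z*G_k/(1-G_k)). Then under the substitution z = v/(1+v+v^2), for all k >= 1, G_k = (v/(1+v)) * (1 - v^{2k})/(1 - v^{2k+1}) as rational functions in v. -/
/-!
The closed form satisfies the recursion: with `F = closedForm v k` one computes
`1 - F = (1 - v^(2k+2)) / ((1+v)(1 - v^(2k+1)))`, and then the recursion shifts both exponents
by two. Every denominator met along the way divides some `1 - v^n` with `n ≥ 1`, so the identities
hold in any field where `v` is not a root of unity, such as `X` in `ℚ(X)`.
-/

open RatFunc

section ClosedForm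

variable {K : Type*} [Field K] {v : K}

theorem one_sub_pow_ne_zero_of_not_isOfFinOrder (hv : ¬IsOfFinOrder v) {n : ℕ} (hn : 0 < n) :
    1 - v ^ n ≠ 0 := fun h =>
  hv (isOfFinOrder_iff_pow_eq_one.2 ⟨n, hn, (sub_eq_zero.1 h).symm⟩)

theorem one_add_ne_zero_of_not_isOfFinOrder (hv : ¬IsOfFinOrder v) : 1 + v ≠ 0 := by
  have h := one_sub_pow_ne_zero_of_not_isOfFinOrder hv two_pos
  contrapose! h
  linear_combination (1 - v) * h

theorem one_add_add_sq_ne_zero_of_not_isOfFinOrder (hv : ¬IsOfFinOrder v) :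
    1 + v + v ^ 2 ≠ 0 := by
  have h := one_sub_pow_ne_zero_of_not_isOfFinOrder hv three_pos
  contrapose! h
  linear_combination (1 - v) * h

variable (v) in
def closedForm (k : ℕ) : K := v / (1 + v) * ((1 - v ^ (2 * k)) / (1 - v ^ (2 * k + 1)))

theorem closedForm_one (hv : ¬IsOfFinOrder v) : closedForm v 1 = v / (1 + v + v ^ 2) := by
  have := one_add_ne_zero_of_not_isOfFinOrder hv
  have := one_add_add_sq_ne_zero_of_not_isOfFinOrder hv
  have := one_sub_pow_ne_zero_of_not_isOfFinOrder hv (n := 3) three_pos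
  unfold closedForm
  field_simp
  ring

theorem one_sub_closedForm (hv : ¬IsOfFinOrder v) (k : ℕ) :
    1 - closedForm v k = (1 - v ^ (2 * k + 2)) / ((1 + v) * (1 - v ^ (2 * k + 1))) := by
  have := one_add_ne_zero_of_not_isOfFinOrder hv
  have := one_sub_pow_ne_zero_of_not_isOfFinOrder hv (n := 2 * k + 1) (by omega)
  unfold closedForm
  field_simp
  ring

theorem one_sub_mul_closedForm_div (hv : ¬IsOfFinOrder v) (k : ℕ) :
    1 - v / (1 + v + v ^ 2) * closedForm v k / (1 - closedForm v k) =
      (1 + v) * (1 - v ^ (2 * k + 3)) / ((1 + v + v ^ 2) * (1 - v ^ (2 * k + 2))) := by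
  have := one_add_ne_zero_of_not_isOfFinOrder hv
  have := one_add_add_sq_ne_zero_of_not_isOfFinOrder hv
  have := one_sub_pow_ne_zero_of_not_isOfFinOrder hv (n := 2 * k + 1) (by omega)
  have := one_sub_pow_ne_zero_of_not_isOfFinOrder hv (n := 2 * k + 2) (by omega)
  rw [one_sub_closedForm hv]
  unfold closedForm
  field_simp
  ring

theorem closedForm_succ (hv : ¬IsOfFinOrder v) (k : ℕ) :
    closedForm v (k + 1) =
      v / (1 + v + v ^ 2) / (1 - v / (1 + v + v ^ 2) * closedForm v k / (1 - closedForm v k)) := by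
  have := one_add_ne_zero_of_not_isOfFinOrder hv
  have := one_add_add_sq_ne_zero_of_not_isOfFinOrder hv
  have := one_sub_pow_ne_zero_of_not_isOfFinOrder hv (n := 2 * k + 2) (by omega)
  have := one_sub_pow_ne_zero_of_not_isOfFinOrder hv (n := 2 * k + 3) (by omega)
  rw [one_sub_mul_closedForm_div hv, closedForm, mul_add_one, show 2 * k + 2 + 1 = 2 * k + 3 by ring]
  field_simp

end ClosedForm

open scoped Polynomial in
theorem RatFunc.not_isOfFinOrder_X {K : Type*} [Field K] : ¬IsOfFinOrder (X : RatFunc K) := by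
  rw [isOfFinOrder_iff_pow_eq_one]
  rintro ⟨n, hn, h⟩
  rw [← algebraMap_X, ← map_pow, ← map_one (algebraMap K[X] (RatFunc K))] at h
  have := congrArg Polynomial.natDegree (algebraMap_injective K h)
  rw [Polynomial.natDegree_X_pow, Polynomial.natDegree_one] at this
  omega

/-- With `z = v/(1+v+v²)`, the rational functions defined by `G_1 = z`,
`G_{k+1} = z/(1 - z·G_k/(1-G_k))` satisfy
`G_k = (v/(1+v)) · (1-v^{2k})/(1-v^{2k+1})` for all `k ≥ 1`. -/
theorem G_closed_form
    (G : ℕ → RatFunc ℚ)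
    (z : RatFunc ℚ) (hz : z = X / (1 + X + X ^ 2))
    (hG1 : G 1 = z)
    (hGrec : ∀ k ≥ 1, G (k + 1) = z / (1 - z * G k / (1 - G k))) :
    ∀ k ≥ 1, G k = X / (1 + X) * ((1 - X ^ (2 * k)) / (1 - X ^ (2 * k + 1))) := by
  subst hz
  intro k hk
  induction k, hk using Nat.le_induction with
  | base => exact hG1.trans (closedForm_one not_isOfFinOrder_X).symm
  | succ k hk ih =>
    rw [hGrec k hk, ih]
    exact (closedForm_succ not_isOfFinOrder_X k).symm
end

section
/- With z = v/(1+v+v^2) and F_h = (v^2/(1+v+v^2)) * (1-v^{2h})/(1-v^{2h+2}), the rational function (z/(1-z)) * 1/(1 - F_h/(1-z)) equals v*(1-v^{2h+2})/(1-v^{2h+4}) for all h >= 1. -/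
/-!
Since `1 - z = (1 + v²)/(1 + v + v²)`, we get `z/(1 - z) = v/(1 + v²)`, and the identity
`(1 + v²)(1 - v^{2h+2}) - v²(1 - v^{2h}) = 1 - v^{2h+4}` collapses the denominator
`1 - F_h/(1 - z)` to `(1 - v^{2h+4})/((1 + v²)(1 - v^{2h+2}))`. This holds in any field where the
denominators are nonzero; in `ℚ(v)` they are, being nonzero polynomials with constant term `1`.
-/

open RatFunc

section Identity

variable {K : Type*} [Field K] {v : K}

theorem one_sub_div_one_add_add_sq (hv : 1 + v + v ^ 2 ≠ 0) :
    1 - v / (1 + v + v ^ 2) = (1 + v ^ 2) / (1 + v + v ^ 2) := by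
  field_simp
  ring

theorem height_gf_denominator_eq (h : ℕ) (hv : 1 + v + v ^ 2 ≠ 0) (hv' : 1 + v ^ 2 ≠ 0)
    (hh : 1 - v ^ (2 * h + 2) ≠ 0) :
    1 - v ^ 2 / (1 + v + v ^ 2) * ((1 - v ^ (2 * h)) / (1 - v ^ (2 * h + 2)))
        / (1 - v / (1 + v + v ^ 2)) =
      (1 - v ^ (2 * h + 4)) / ((1 + v ^ 2) * (1 - v ^ (2 * h + 2))) := by
  rw [one_sub_div_one_add_add_sq hv]
  field_simp
  ring

theorem height_gf_eq (h : ℕ) (hv : 1 + v + v ^ 2 ≠ 0) (hv' : 1 + v ^ 2 ≠ 0)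
    (hh : 1 - v ^ (2 * h + 2) ≠ 0) (hh' : 1 - v ^ (2 * h + 4) ≠ 0) :
    v / (1 + v + v ^ 2) / (1 - v / (1 + v + v ^ 2)) *
        (1 / (1 - v ^ 2 / (1 + v + v ^ 2) * ((1 - v ^ (2 * h)) / (1 - v ^ (2 * h + 2)))
          / (1 - v / (1 + v + v ^ 2)))) =
      v * (1 - v ^ (2 * h + 2)) / (1 - v ^ (2 * h + 4)) := by
  rw [height_gf_denominator_eq h hv hv' hh, one_sub_div_one_add_add_sq hv]
  field_simp

end Identity

namespace RatFunc

variable {K : Type*} [Field K]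

theorem algebraMap_ne_zero_of_eval_zero_ne_zero {p : Polynomial K} (hp : p.eval 0 ≠ 0) :
    algebraMap (Polynomial K) (RatFunc K) p ≠ 0 :=
  algebraMap_ne_zero (by rintro rfl; simp at hp)

theorem one_add_X_add_X_sq_ne_zero : (1 + X + X ^ 2 : RatFunc K) ≠ 0 := by
  have h := algebraMap_ne_zero_of_eval_zero_ne_zero
    (p := (1 + .X + .X ^ 2 : Polynomial K)) (by simp)
  simpa only [map_add, map_one, map_pow, algebraMap_X] using h

theorem one_add_X_sq_ne_zero : (1 + X ^ 2 : RatFunc K) ≠ 0 := by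
  have h := algebraMap_ne_zero_of_eval_zero_ne_zero (p := (1 + .X ^ 2 : Polynomial K)) (by simp)
  simpa only [map_add, map_one, map_pow, algebraMap_X] using h

theorem one_sub_X_pow_ne_zero {n : ℕ} (hn : n ≠ 0) : (1 - X ^ n : RatFunc K) ≠ 0 := by
  have h := algebraMap_ne_zero_of_eval_zero_ne_zero
    (p := (1 - .X ^ n : Polynomial K)) (by simp [hn])
  simpa only [map_sub, map_one, map_pow, algebraMap_X] using h

end RatFunc

/-- With `z = v/(1+v+v²)` and `F_h = (v²/(1+v+v²))(1-v^{2h})/(1-v^{2h+2})`, the rational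
function `(z/(1-z)) · 1/(1 - F_h/(1-z))` equals `v(1-v^{2h+2})/(1-v^{2h+4})`
for all `h ≥ 1`. -/
theorem height_gf_closed_form :
    ∀ h : ℕ, h ≥ 1 →
      (X / (1 + X + X ^ 2)) / (1 - X / (1 + X + X ^ 2)) *
          (1 / (1 - (X ^ 2 / (1 + X + X ^ 2)) * ((1 - X ^ (2 * h)) / (1 - X ^ (2 * h + 2)))
            / (1 - X / (1 + X + X ^ 2)))) =
        (X * (1 - X ^ (2 * h + 2)) / (1 - X ^ (2 * h + 4)) : RatFunc ℚ) := fun h _ =>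
  height_gf_eq h one_add_X_add_X_sq_ne_zero one_add_X_sq_ne_zero
    (one_sub_X_pow_ne_zero (by omega)) (one_sub_X_pow_ne_zero (by omega))
end

section
/- Let F(z,u) and G(z,u) be formal power series in z (with coefficients polynomials in u) with zero constant term in z satisfying F = z*G/(1-G) and G = z*u + z*F/(1-F). Then F equals (1 - zu - z^2 + z^2 u - sqrt(D)) / (2(1 - zu + z)), where D = 1 - 2zu - 2z^2 - 2z^2 u + z^2 u^2 - 2 z^3 u + 2 z^3 u^2 + z^4 - 2 z^4 u + z^4 u^2, i.e., F satisfies the quadratic equation (1 - zu + z) F^2 - (1 - zu - z^2 + z^2 u) F + z^2 u = 0. -/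
open PowerSeries

/- Clearing denominators gives `F (1 - G) = z G` and `(G - z u)(1 - F) = z F`. The first says
`G (z + F) = F`, so multiplying the second by `z + F` eliminates `G` and leaves the quadratic. -/

theorem quadratic_of_mul_one_sub_eq {R : Type*} [CommRing R] {z u F G : R}
    (hF : F * (1 - G) = z * G) (hG : (G - z * u) * (1 - F) = z * F) :
    (1 - z * u + z) * F ^ 2 - (1 - z * u - z ^ 2 + z ^ 2 * u) * F + z ^ 2 * u = 0 := by
  linear_combination (F - 1) * hF - (z + F) * hG

theorem constantCoeff_one_sub_ne_zero {R : Type*} [Ring R] [Nontrivial R] {φ : R⟦X⟧}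
    (hφ : constantCoeff φ = 0) : constantCoeff (1 - φ) ≠ 0 := by
  simp [hφ]

theorem bivariate_F_quadratic_general
    (F G : PowerSeries (RatFunc ℚ))
    (hF0 : constantCoeff F = 0)
    (hG0 : constantCoeff G = 0)
    (u : PowerSeries (RatFunc ℚ))
    (hF : F = X * G * (1 - G)⁻¹)
    (hG : G = X * u + X * F * (1 - F)⁻¹) :
    (1 - X * u + X) * F ^ 2 - (1 - X * u - X ^ 2 + X ^ 2 * u) * F + X ^ 2 * u = 0 := by
  have hG' : G - X * u = X * F * (1 - F)⁻¹ := by rw [hG]; ring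
  exact quadratic_of_mul_one_sub_eq
    ((eq_mul_inv_iff_mul_eq (constantCoeff_one_sub_ne_zero hG0)).1 hF)
    ((eq_mul_inv_iff_mul_eq (constantCoeff_one_sub_ne_zero hF0)).1 hG')

/-- Bivariate leaf-counting generating function: if `F`, `G` are power series in `z`
(coefficients rational functions in `u`) with zero constant term satisfying
`F = z·G/(1-G)` and `G = z·u + z·F/(1-F)`, then `F` satisfies the quadratic equation
`(1 - zu + z)F² - (1 - zu - z² + z²u)F + z²u = 0`, i.e. `F` is the branch
`(1 - zu - z² + z²u - √D)/(2(1 - zu + z))` of its solution. -/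
theorem bivariate_F_quadratic
    (F G : PowerSeries (RatFunc ℚ))
    (hF0 : constantCoeff F = 0)
    (hG0 : constantCoeff G = 0)
    (u : PowerSeries (RatFunc ℚ)) (hu : u = C RatFunc.X)
    (hF : F = X * G * (1 - G)⁻¹)
    (hG : G = X * u + X * F * (1 - F)⁻¹) :
    (1 - X * u + X) * F ^ 2 - (1 - X * u - X ^ 2 + X ^ 2 * u) * F + X ^ 2 * u = 0 :=
  bivariate_F_quadratic_general F G hF0 hG0 u hF hG
end

section
/- Setting u = 1 in the bivariate series of the previous context and differentiating with respect to u at u = 1, the resulting leaf-counting generating function, under the substitution z = v/(1+v+v^2), equals R(v) = v(1+v)(1 - v + 2v^2 - v^3) / ((1-v)(1+v+v^2)) as rational functions in v. -/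
/-!
Everything is read off at `u = 1`. Evaluating the two defining equations there, and differentiating
them in `u` there, gives a polynomial system for `F(z,1)`, `∂ᵤF(z,1)`, `T(z,1)` and
`R = ∂ᵤT(z,1)`. After the substitution `z = v/(1+v+v²)` the quadratic for `F(z,1)` factors: its
root with zero constant term is `F = vz`, whence `T(z,1) = v`, and the two linear equations for the
derivatives then give `R` as a rational function of `v`.
-/

open PowerSeries

theorem PowerSeries.comp_eq_subst_s15 {f a : PowerSeries ℚ} (ha : constantCoeff a = 0) :
    f.comp a = f.subst a := by
  ext n
  have hsub : HasSubst a := HasSubst.of_constantCoeff_zero' ha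
  have htail : ↑(n + 1) ≤ (f - trunc (n + 1) f : PowerSeries ℚ).order :=
    nat_le_order _ _ fun i hi => by simp [coeff_trunc, hi]
  have hcoeff : coeff n ((f - trunc (n + 1) f).subst a) = 0 :=
    coeff_of_lt_order _ ((Nat.cast_lt.mpr n.lt_succ_self).trans_le
      (htail.trans (le_order_subst_left' ha)))
  rw [subst_sub hsub, map_sub, sub_eq_zero, subst_coe hsub] at hcoeff
  rw [comp, coeff_mk, hcoeff]

section AtOne

variable {R : Type*} [CommRing R]

noncomputable abbrev evalAtOne : PowerSeries (Polynomial R) →+* PowerSeries R :=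
  map (Polynomial.evalRingHom 1)

noncomputable def derivAtOne : PowerSeries (Polynomial R) →+ PowerSeries R where
  toFun f := mk fun n => (coeff n f).derivative.eval 1
  map_zero' := by ext; simp
  map_add' f g := by ext; simp

@[simp]
theorem coeff_derivAtOne (f : PowerSeries (Polynomial R)) (n : ℕ) :
    coeff n (derivAtOne f) = (coeff n f).derivative.eval 1 :=
  coeff_mk n (fun n => (coeff n f).derivative.eval 1)

theorem derivAtOne_mul (f g : PowerSeries (Polynomial R)) :
    derivAtOne (f * g) = derivAtOne f * evalAtOne g + evalAtOne f * derivAtOne g := by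
  ext n
  simp [coeff_mul, Polynomial.eval_finsetSum, Finset.sum_add_distrib]

@[simp]
theorem derivAtOne_C (p : Polynomial R) : derivAtOne (C p) = C (p.derivative.eval 1) := by
  ext n
  by_cases hn : n = 0 <;> simp [coeff_C, hn]

@[simp]
theorem derivAtOne_one : derivAtOne (1 : PowerSeries (Polynomial R)) = 0 := by
  simpa using derivAtOne_C (1 : Polynomial R)

@[simp]
theorem derivAtOne_X : derivAtOne (X : PowerSeries (Polynomial R)) = 0 := by
  ext n
  by_cases hn : n = 1 <;> simp [coeff_X, hn]

end AtOne

/-- The equations satisfied at `u = 1` by `f₀ = F(z,1)`, `f₁ = ∂ᵤF(z,1)`, `t₀ = T(z,1)` and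
`t₁ = ∂ᵤT(z,1)`, in the variable `z`. -/
structure IsLeafSystem {A : Type*} [CommRing A] (z f₀ f₁ t₀ t₁ : A) : Prop where
  quad : f₀ ^ 2 - (1 - z) * f₀ + z ^ 2 = 0
  tree : t₀ * (1 - z - f₀) = z
  quad_deriv : f₁ * (2 * f₀ - 1 + z) = z * f₀ ^ 2 - (z - z ^ 2) * f₀ - z ^ 2
  tree_deriv : (t₁ - z) * (1 - z - f₀) = t₀ * (z + f₁)

theorem IsLeafSystem.map {A B : Type*} [CommRing A] [CommRing B] {z f₀ f₁ t₀ t₁ : A}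
    (h : IsLeafSystem z f₀ f₁ t₀ t₁) (φ : A →+* B) :
    IsLeafSystem (φ z) (φ f₀) (φ f₁) (φ t₀) (φ t₁) where
  quad := by simpa using congrArg φ h.quad
  tree := by simpa using congrArg φ h.tree
  quad_deriv := by simpa [map_ofNat] using congrArg φ h.quad_deriv
  tree_deriv := by simpa using congrArg φ h.tree_deriv

theorem isLeafSystem_at_one {R : Type*} [CommRing R] {F T : PowerSeries (Polynomial R)}
    (hF : (1 - X * C Polynomial.X + X) * F ^ 2
      - (1 - X * C Polynomial.X - X ^ 2 + X ^ 2 * C Polynomial.X) * F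
      + X ^ 2 * C Polynomial.X = 0)
    (hT : (T - X * C Polynomial.X + X) * (1 - X * C Polynomial.X - F) = X) :
    IsLeafSystem X (evalAtOne F) (derivAtOne F) (evalAtOne T) (derivAtOne T) := by
  have evalF := congrArg evalAtOne hF
  have evalT := congrArg evalAtOne hT
  have derivF := congrArg derivAtOne hF
  have derivT := congrArg derivAtOne hT
  simp only [map_add, map_sub, map_mul, map_pow, map_one, map_zero, map_X, map_C,
    Polynomial.coe_evalRingHom, Polynomial.eval_X] at evalF evalT
  simp only [sq, map_add, map_sub, map_mul, derivAtOne_mul, derivAtOne_one, derivAtOne_X,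
    derivAtOne_C, map_one, map_zero, map_X, map_C, Polynomial.coe_evalRingHom, Polynomial.eval_X,
    Polynomial.derivative_X, Polynomial.eval_one] at derivF derivT
  exact
    { quad := by linear_combination evalF
      tree := by linear_combination evalT
      quad_deriv := by linear_combination derivF
      tree_deriv := by linear_combination derivT }

section Solution

variable {R : Type*} [CommRing R] {z f₀ f₁ t₀ t₁ : R⟦X⟧}

theorem IsLeafSystem.f₀_eq [IsDomain R] (h : IsLeafSystem z f₀ f₁ t₀ t₁)
    (hz : z * (1 + X + X ^ 2) = X) (hf₀ : constantCoeff f₀ = 0) : f₀ = X * z := by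
  have hz₀ : constantCoeff z = 0 := by simpa using congrArg constantCoeff hz
  -- the other root, `1 - z - X * z`, has constant coefficient `1`
  have hroots : (f₀ - X * z) * (f₀ - (1 - z - X * z)) = 0 := by
    linear_combination h.quad - z * hz
  rcases mul_eq_zero.mp hroots with hroot | hroot
  · exact sub_eq_zero.mp hroot
  · simpa [hf₀, hz₀] using congrArg constantCoeff hroot

theorem IsLeafSystem.t₀_eq (h : IsLeafSystem z (X * z) f₁ t₀ t₁)
    (hz : z * (1 + X + X ^ 2) = X) : t₀ = X := by
  linear_combination (1 + X + X ^ 2) * h.tree + (t₀ * (1 + X) + 1) * hz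

theorem IsLeafSystem.f₁_mul_one_sub_X [IsDomain R] (h : IsLeafSystem z (X * z) f₁ t₀ t₁)
    (hz : z * (1 + X + X ^ 2) = X) : f₁ * (1 - X) = X * z * (1 - X * z) := by
  have h1X : (1 + X : R⟦X⟧) ≠ 0 := fun h1X => by simpa using congrArg constantCoeff h1X
  refine mul_left_cancel₀ h1X ?_
  linear_combination (-(1 + X + X ^ 2)) * h.quad_deriv +
    (f₁ * (2 * X + 1) - z * (1 + X) * (X * z - 1)) * hz

theorem IsLeafSystem.t₁_mul_eq [IsDomain R] (h : IsLeafSystem z f₀ f₁ t₀ t₁)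
    (hz : z * (1 + X + X ^ 2) = X) (hf₀ : constantCoeff f₀ = 0) :
    t₁ * ((1 - X) * (1 + X + X ^ 2)) = X + X ^ 3 + X ^ 4 - X ^ 5 := by
  obtain rfl := h.f₀_eq hz hf₀
  obtain rfl := h.t₀_eq hz
  have hf₁ := h.f₁_mul_one_sub_X hz
  have ht₁ : t₁ - z = X * (1 + X + X ^ 2) * (z + f₁) := by
    linear_combination (1 + X + X ^ 2) * h.tree_deriv + (t₁ - z) * (1 + X) * hz
  linear_combination (1 - X) * (1 + X + X ^ 2) * ht₁ + X * (1 + X + X ^ 2) ^ 2 * hf₁ +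
    ((1 - X) + (1 - X) * X * (1 + X + X ^ 2) + X ^ 2 * (1 + X + X ^ 2)
      - X ^ 3 * (1 + X + X ^ 2) * z - X ^ 4) * hz

end Solution

theorem IsLeafSystem.comp_t₁_eq {f₀ f₁ t₀ t₁ : ℚ⟦X⟧}
    (h : IsLeafSystem X f₀ f₁ t₀ t₁) (hf₀ : constantCoeff f₀ = 0) :
    t₁.comp (X * (1 + X + X ^ 2)⁻¹) =
      X * (1 + X) * (1 - X + 2 * X ^ 2 - X ^ 3) * (1 - X)⁻¹ * (1 + X + X ^ 2)⁻¹ := by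
  have hw : constantCoeff (1 + X + X ^ 2 : ℚ⟦X⟧) ≠ 0 := by simp
  have hz : X * (1 + X + X ^ 2)⁻¹ * (1 + X + X ^ 2) = (X : ℚ⟦X⟧) := by
    rw [mul_assoc, PowerSeries.inv_mul_cancel _ hw, mul_one]
  have hz₀ : constantCoeff (X * (1 + X + X ^ 2)⁻¹ : ℚ⟦X⟧) = 0 := by simp
  have hs := HasSubst.of_constantCoeff_zero' hz₀
  have hsys := h.map (substAlgHom hs : ℚ⟦X⟧ →ₐ[ℚ] ℚ⟦X⟧).toRingHom
  simp only [AlgHom.toRingHom_eq_coe, RingHom.coe_coe, substAlgHom_X] at hsys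
  have ht₁ := hsys.t₁_mul_eq hz
    (by rw [coe_substAlgHom]; exact constantCoeff_subst_eq_zero hz₀ _ hf₀)
  rw [comp_eq_subst_s15 hz₀, ← coe_substAlgHom hs, eq_mul_inv_iff_mul_eq hw,
    eq_mul_inv_iff_mul_eq (by simp)]
  linear_combination ht₁

/-- Let `F(z,u)` satisfy `(1-zu+z)F² - (1-zu-z²+z²u)F + z²u = 0` with `F(0,u) = 0`, and
set `T(z,u) = (z/(1-zu))·1/(1 - F/(1-zu)) + zu - z`, i.e.
`(T - zu + z)(1 - zu - F) = z`.  Then the leaf-count generating function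
`R(z) = ∂T/∂u |_{u=1}`, rewritten in `v` via `z = v/(1+v+v²)`, equals
`v(1+v)(1-v+2v²-v³)/((1-v)(1+v+v²))`. -/
theorem leaf_count_gf
    (F T : PowerSeries (Polynomial ℚ))
    (u : PowerSeries (Polynomial ℚ)) (hu : u = C Polynomial.X)
    (hF0 : constantCoeff F = 0)
    (hFq : (1 - X * u + X) * F ^ 2 - (1 - X * u - X ^ 2 + X ^ 2 * u) * F + X ^ 2 * u = 0)
    (hT : (T - X * u + X) * (1 - X * u - F) = X)
    (R : PowerSeries ℚ)
    (hR : R = PowerSeries.mk fun n =>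
      Polynomial.eval 1 (Polynomial.derivative (coeff n T))) :
    PowerSeries.comp R (X * (1 + X + X ^ 2)⁻¹) =
      X * (1 + X) * (1 - X + 2 * X ^ 2 - X ^ 3) * (1 - X)⁻¹ * (1 + X + X ^ 2)⁻¹ := by
  subst hu hR
  exact (isLeafSystem_at_one hFq hT).comp_t₁_eq
    (by simp [← coeff_zero_eq_constantCoeff_apply, hF0])
end

section
/- For real z in a neighborhood of 1/3 with z <= 1/3, the solution v(z) in [0,1] of z = v/(1+v+v^2) satisfies 1 - v(z) ~ sqrt(3) * sqrt(1-3z) as z -> 1/3^-; i.e., the limit of (1 - v(z))/sqrt(1-3z) as z increases to 1/3 is sqrt(3). -/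
/-!
Substituting `z = v/(1+v+v²)` gives the exact identity `1 - 3z = (1-v)²/(1+v+v²)`, so for `v < 1`
the quotient `(1-v)/√(1-3z)` equals `√(1+v+v²)`. The same identity bounds `(1-v)²` by `3(1-3z)`,
which forces `v(z) → 1` as `z → 1/3`, and hence `√(1+v+v²) → √3`.
-/

open Filter Topology

lemma one_add_add_sq_pos (w : ℝ) : 0 < 1 + w + w ^ 2 := by
  nlinarith [sq_nonneg (w + 1 / 2)]

lemma one_sub_three_mul_eq {w z : ℝ} (hz : z = w / (1 + w + w ^ 2)) :
    1 - 3 * z = (1 - w) ^ 2 / (1 + w + w ^ 2) := by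
  have := one_add_add_sq_pos w
  subst hz
  field_simp
  ring

lemma one_sub_le_sqrt {w z : ℝ} (hw₀ : -2 ≤ w) (hw₁ : w ≤ 1) (hz : z = w / (1 + w + w ^ 2)) :
    1 - w ≤ √(3 * (1 - 3 * z)) := by
  have hq := one_add_add_sq_pos w
  have hsq : (1 - w) ^ 2 ≤ 3 * (1 - 3 * z) := by
    rw [one_sub_three_mul_eq hz]
    calc (1 - w) ^ 2 = (1 - w) ^ 2 / (1 + w + w ^ 2) * (1 + w + w ^ 2) :=
          (div_mul_cancel₀ _ hq.ne').symm
      _ ≤ (1 - w) ^ 2 / (1 + w + w ^ 2) * 3 := by gcongr; nlinarith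
      _ = 3 * ((1 - w) ^ 2 / (1 + w + w ^ 2)) := mul_comm _ _
  exact (le_abs_self _).trans (Real.abs_le_sqrt hsq)

lemma one_sub_div_sqrt_eq {w z : ℝ} (hw : w < 1) (hz : z = w / (1 + w + w ^ 2)) :
    (1 - w) / √(1 - 3 * z) = √(1 + w + w ^ 2) := by
  rw [one_sub_three_mul_eq hz, Real.sqrt_div' _ (one_add_add_sq_pos w).le,
    Real.sqrt_sq (by linarith), div_div_cancel₀ (by linarith)]

/-- If `v(z) ∈ (0,1]` solves `z = v/(1+v+v²)` for `z ∈ (0,1/3]`, then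
`1 - v(z) ~ √3·√(1-3z)` as `z → 1/3⁻`. -/
theorem one_sub_v_asymptotics
    (v : ℝ → ℝ)
    (hv : ∀ z ∈ Set.Ioc (0 : ℝ) (1 / 3),
      v z ∈ Set.Ioc (0 : ℝ) 1 ∧ z = v z / (1 + v z + (v z) ^ 2)) :
    Tendsto (fun z : ℝ => (1 - v z) / Real.sqrt (1 - 3 * z))
      (nhdsWithin (1 / 3) (Set.Iio (1 / 3))) (nhds (Real.sqrt 3)) := by
  have hnear : ∀ᶠ z in 𝓝[<] (1 / 3 : ℝ), z ∈ Set.Ioo 0 (1 / 3) := Ioo_mem_nhdsLT (by norm_num)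
  have hv_lt : ∀ z ∈ Set.Ioo (0 : ℝ) (1 / 3), v z < 1 := by
    rintro z ⟨hz₀, hz₁⟩
    obtain ⟨⟨-, hle⟩, heq⟩ := hv z ⟨hz₀, hz₁.le⟩
    refine hle.lt_of_ne fun h => hz₁.ne ?_
    rw [heq, h]
    norm_num
  have hv_lim : Tendsto v (𝓝[<] (1 / 3)) (𝓝 1) := by
    have hlower : Tendsto (fun z : ℝ => 1 - √(3 * (1 - 3 * z))) (𝓝[<] (1 / 3)) (𝓝 1) :=
      ((by fun_prop : Continuous fun z : ℝ => 1 - √(3 * (1 - 3 * z))).tendsto' _ _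
        (by norm_num)).mono_left nhdsWithin_le_nhds
    refine tendsto_of_tendsto_of_tendsto_of_le_of_le' hlower tendsto_const_nhds ?_ ?_
    · filter_upwards [hnear] with z hz
      obtain ⟨⟨hv₀, hv₁⟩, heq⟩ := hv z ⟨hz.1, hz.2.le⟩
      linarith [one_sub_le_sqrt (by linarith) hv₁ heq]
    · filter_upwards [hnear] with z hz
      exact (hv z ⟨hz.1, hz.2.le⟩).1.2
  have hsqrt : Tendsto (fun z => √(1 + v z + v z ^ 2)) (𝓝[<] (1 / 3)) (𝓝 √3) :=
    ((by fun_prop : Continuous fun w : ℝ => √(1 + w + w ^ 2)).tendsto' 1 _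
      (by norm_num)).comp hv_lim
  refine hsqrt.congr' ?_
  filter_upwards [hnear] with z hz
  exact (one_sub_div_sqrt_eq (hv_lt z hz) (hv z ⟨hz.1, hz.2.le⟩).2).symm
end

section
/- For 0 < v < 1, the Lambert-type series L(v) = sum_{h>=1} v^{2h}/(1-v^{2h}) satisfies L(v) ~ -log(1-v)/(2(1-v)) as v -> 1^-; i.e., the ratio of L(v) to -log(1-v)/(2(1-v)) tends to 1. -/
/-!
Write `L(q) = ∑_{n≥1} qⁿ/(1-qⁿ)`, so that the series of the theorem is `L(v²)`. Bernoulli's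
inequality `1 - qⁿ ≤ n(1-q)` and its companion `n qⁿ (1-q) ≤ 1 - qⁿ` squeeze each term between
`qⁿ/(n(1-q))` and `qⁿ/(n(1-q)) + qⁿ`; summing, `L(q)` lies between `-log(1-q)/(1-q)` and that plus
`q/(1-q)`. At `q = v²` the error term is negligible, and since `log(1+v)` stays bounded,
`-log(1-v²)/(1-v²) ~ -log(1-v)/(2(1-v))` as `v → 1⁻`.
-/

open Filter Real Topology Asymptotics

noncomputable def lambertSeries (q : ℝ) : ℝ := ∑' n : ℕ, q ^ (n + 1) / (1 - q ^ (n + 1))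

section TermBounds

variable {q : ℝ}

lemma one_sub_pow_le_mul_one_sub (hq : -1 ≤ q) (n : ℕ) : 1 - q ^ n ≤ n * (1 - q) := by
  linarith [one_add_mul_sub_le_pow hq n]

lemma mul_pow_mul_one_sub_le_one_sub_pow (hq0 : 0 ≤ q) (hq1 : q ≤ 1) (n : ℕ) :
    n * q ^ n * (1 - q) ≤ 1 - q ^ n := by
  induction n with
  | zero => simp
  | succ n ih =>
    have hqn : q ^ (n + 1) ≤ 1 := pow_le_one₀ hq0 hq1
    have hstep := mul_le_mul_of_nonneg_left ih hq0
    push_cast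
    rw [pow_succ] at hqn ⊢
    nlinarith [mul_nonneg (sub_nonneg.2 hqn) (sub_nonneg.2 hq1)]

lemma one_sub_pow_pos (hq0 : 0 ≤ q) (hq1 : q < 1) {n : ℕ} (hn : n ≠ 0) : 0 < 1 - q ^ n :=
  sub_pos.2 (pow_lt_one₀ hq0 hq1 hn)

lemma pow_div_mul_one_sub_le_pow_div_one_sub_pow (hq0 : 0 ≤ q) (hq1 : q < 1) {n : ℕ}
    (hn : n ≠ 0) : q ^ n / (n * (1 - q)) ≤ q ^ n / (1 - q ^ n) :=
  div_le_div_of_nonneg_left (pow_nonneg hq0 n) (one_sub_pow_pos hq0 hq1 hn)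
    (one_sub_pow_le_mul_one_sub (by linarith) n)

lemma pow_div_one_sub_pow_le (hq0 : 0 ≤ q) (hq1 : q < 1) {n : ℕ} (hn : n ≠ 0) :
    q ^ n / (1 - q ^ n) ≤ q ^ n / (n * (1 - q)) + q ^ n := by
  have hden : 0 < (n : ℝ) * (1 - q) := mul_pos (by positivity) (by linarith)
  have hpow := one_sub_pow_pos hq0 hq1 hn
  rw [div_add' _ _ _ hden.ne', div_le_div_iff₀ hpow hden]
  nlinarith [mul_le_mul_of_nonneg_left (mul_pow_mul_one_sub_le_one_sub_pow hq0 hq1.le n)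
    (pow_nonneg hq0 n)]

end TermBounds

section SeriesBounds

variable {q : ℝ}

lemma hasSum_pow_div_mul_one_sub (hq : |q| < 1) :
    HasSum (fun n : ℕ => q ^ (n + 1) / ((n + 1 : ℕ) * (1 - q))) (-log (1 - q) / (1 - q)) := by
  simpa [div_div] using (hasSum_pow_div_log_of_abs_lt_one hq).div_const (1 - q)

lemma hasSum_pow_succ (hq0 : 0 ≤ q) (hq1 : q < 1) :
    HasSum (fun n : ℕ => q ^ (n + 1)) (q / (1 - q)) := by
  simpa [pow_succ', div_eq_mul_inv] using (hasSum_geometric_of_lt_one hq0 hq1).mul_left q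

lemma summable_lambertSeries (hq0 : 0 ≤ q) (hq1 : q < 1) :
    Summable fun n : ℕ => q ^ (n + 1) / (1 - q ^ (n + 1)) :=
  ((hasSum_pow_div_mul_one_sub (by rwa [abs_of_nonneg hq0])).add
    (hasSum_pow_succ hq0 hq1)).summable.of_nonneg_of_le
    (fun n => div_nonneg (pow_nonneg hq0 _) (one_sub_pow_pos hq0 hq1 n.succ_ne_zero).le)
    (fun n => pow_div_one_sub_pow_le hq0 hq1 n.succ_ne_zero)

lemma neg_log_one_sub_div_le_lambertSeries (hq0 : 0 ≤ q) (hq1 : q < 1) :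
    -log (1 - q) / (1 - q) ≤ lambertSeries q := by
  have hsum := hasSum_pow_div_mul_one_sub (by rwa [abs_of_nonneg hq0])
  rw [← hsum.tsum_eq]
  exact hsum.summable.tsum_le_tsum
    (fun n => pow_div_mul_one_sub_le_pow_div_one_sub_pow hq0 hq1 n.succ_ne_zero)
    (summable_lambertSeries hq0 hq1)

lemma lambertSeries_le (hq0 : 0 ≤ q) (hq1 : q < 1) :
    lambertSeries q ≤ -log (1 - q) / (1 - q) + q / (1 - q) := by
  have hsum := (hasSum_pow_div_mul_one_sub (by rwa [abs_of_nonneg hq0])).add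
    (hasSum_pow_succ hq0 hq1)
  rw [← hsum.tsum_eq]
  exact (summable_lambertSeries hq0 hq1).tsum_le_tsum
    (fun n => pow_div_one_sub_pow_le hq0 hq1 n.succ_ne_zero) hsum.summable

end SeriesBounds

section NearOne

lemma tendsto_one_sub_nhdsLT_one : Tendsto (fun v : ℝ => 1 - v) (𝓝[<] 1) (𝓝[>] 0) := by
  refine tendsto_nhdsWithin_of_tendsto_nhds_of_eventually_within _ ?_ ?_
  · exact ((continuous_sub_left 1).tendsto' 1 0 (sub_self 1)).mono_left nhdsWithin_le_nhds
  · filter_upwards [self_mem_nhdsWithin] with v (hv : v < 1)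
    exact sub_pos.2 hv

lemma tendsto_neg_log_one_sub_nhdsLT_one :
    Tendsto (fun v : ℝ => -log (1 - v)) (𝓝[<] 1) atTop :=
  tendsto_neg_atBot_atTop.comp (tendsto_log_nhdsGT_zero.comp tendsto_one_sub_nhdsLT_one)

lemma eventually_mem_Ioo_nhdsLT_one : ∀ᶠ v in 𝓝[<] (1 : ℝ), v ∈ Set.Ioo 0 1 :=
  Ioo_mem_nhdsLT zero_lt_one

lemma neg_log_one_sub_sq_isEquivalent :
    (fun v : ℝ => -log (1 - v ^ 2)) ~[𝓝[<] 1] fun v => -log (1 - v) := by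
  have hlog : Tendsto (fun v : ℝ => -log (1 + v)) (𝓝[<] 1) (𝓝 (-log (1 + 1))) :=
    (((continuous_const_add 1).tendsto 1).log (by norm_num)).neg.mono_left nhdsWithin_le_nhds
  have hsmall : (fun v : ℝ => -log (1 + v)) =o[𝓝[<] 1] fun v => -log (1 - v) :=
    (hlog.isBigO_one ℝ).trans_isLittleO <| (isLittleO_one_left_iff ℝ).2 <|
      tendsto_abs_atTop_atTop.comp tendsto_neg_log_one_sub_nhdsLT_one
  refine (IsEquivalent.refl.add_isLittleO hsmall).congr_left ?_
  filter_upwards [eventually_mem_Ioo_nhdsLT_one] with v ⟨hv0, hv1⟩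
  rw [show 1 - v ^ 2 = (1 - v) * (1 + v) by ring, log_mul (by linarith) (by linarith)]
  simp only [Pi.add_apply]
  ring

lemma one_sub_sq_isEquivalent :
    (fun v : ℝ => 1 - v ^ 2) ~[𝓝[<] 1] fun v => 2 * (1 - v) := by
  have h : (fun v : ℝ => 1 + v) ~[𝓝[<] 1] fun _ => 2 := by
    refine (isEquivalent_const_iff_tendsto two_ne_zero).2 ?_
    exact ((continuous_const_add 1).tendsto' 1 2 one_add_one_eq_two).mono_left nhdsWithin_le_nhds
  refine (h.mul (IsEquivalent.refl (u := fun v : ℝ => 1 - v))).congr_left ?_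
  exact Eventually.of_forall fun v => by simp only [Pi.mul_apply]; ring

lemma neg_log_one_sub_sq_div_isEquivalent :
    (fun v : ℝ => -log (1 - v ^ 2) / (1 - v ^ 2)) ~[𝓝[<] 1]
      fun v => -log (1 - v) / (2 * (1 - v)) :=
  neg_log_one_sub_sq_isEquivalent.div one_sub_sq_isEquivalent

lemma sq_div_one_sub_sq_isLittleO :
    (fun v : ℝ => v ^ 2 / (1 - v ^ 2)) =o[𝓝[<] 1] fun v => -log (1 - v ^ 2) / (1 - v ^ 2) := by
  have hsq : Tendsto (fun v : ℝ => v ^ 2) (𝓝[<] 1) (𝓝 1) := by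
    simpa using ((continuous_pow 2).tendsto (1 : ℝ)).mono_left nhdsWithin_le_nhds
  have hlog : (fun _ => (1 : ℝ)) =o[𝓝[<] 1] fun v : ℝ => -log (1 - v ^ 2) :=
    (isLittleO_one_left_iff ℝ).2 <| tendsto_abs_atTop_atTop.comp <|
      neg_log_one_sub_sq_isEquivalent.symm.tendsto_atTop tendsto_neg_log_one_sub_nhdsLT_one
  simpa only [div_eq_mul_inv] using ((hsq.isBigO_one ℝ).trans_isLittleO hlog).mul_isBigO
    (isBigO_refl (fun v : ℝ => (1 - v ^ 2)⁻¹) _)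

end NearOne

lemma Asymptotics.IsEquivalent.of_le_of_le {α : Type*} {l : Filter α} {f g h u : α → ℝ}
    (hf : f ~[l] u) (hh : h ~[l] u) (hu : ∀ᶠ x in l, 0 < u x) (hfg : f ≤ᶠ[l] g)
    (hgh : g ≤ᶠ[l] h) : g ~[l] u := by
  have hne : ∀ᶠ x in l, u x ≠ 0 := hu.mono fun x hx => hx.ne'
  rw [isEquivalent_iff_tendsto_one hne] at hf hh ⊢
  refine tendsto_of_tendsto_of_tendsto_of_le_of_le' hf hh ?_ ?_
  · filter_upwards [hu, hfg] with x hux hx using div_le_div_of_nonneg_right hx hux.le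
  · filter_upwards [hu, hgh] with x hux hx using div_le_div_of_nonneg_right hx hux.le

lemma eventually_neg_log_one_sub_div_pos :
    ∀ᶠ v in 𝓝[<] (1 : ℝ), 0 < -log (1 - v) / (2 * (1 - v)) := by
  filter_upwards [eventually_mem_Ioo_nhdsLT_one] with v ⟨hv0, hv1⟩
  have : 0 < -log (1 - v) := neg_pos.2 (log_neg (by linarith) (by linarith))
  have : 0 < 1 - v := by linarith
  positivity

lemma lambertSeries_sq_isEquivalent :
    (fun v : ℝ => lambertSeries (v ^ 2)) ~[𝓝[<] 1] fun v => -log (1 - v) / (2 * (1 - v)) := by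
  have hsq : ∀ᶠ v in 𝓝[<] (1 : ℝ), 0 ≤ v ^ 2 ∧ v ^ 2 < 1 := by
    filter_upwards [eventually_mem_Ioo_nhdsLT_one] with v ⟨hv0, hv1⟩
    exact ⟨sq_nonneg v, by nlinarith⟩
  refine neg_log_one_sub_sq_div_isEquivalent.of_le_of_le
    (neg_log_one_sub_sq_div_isEquivalent.add_isLittleO
      (sq_div_one_sub_sq_isLittleO.trans_isEquivalent neg_log_one_sub_sq_div_isEquivalent))
    ?_ ?_ ?_
  · exact eventually_neg_log_one_sub_div_pos
  · filter_upwards [hsq] with v ⟨h0, h1⟩ using neg_log_one_sub_div_le_lambertSeries h0 h1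
  · filter_upwards [hsq] with v ⟨h0, h1⟩
    simpa only [Pi.add_apply, add_div] using lambertSeries_le h0 h1

/-- For `0 < v < 1`, the Lambert-type series `L(v) = ∑_{h≥1} v^{2h}/(1-v^{2h})` satisfies
`L(v) ~ -log(1-v)/(2(1-v))` as `v → 1⁻`. -/
theorem lambert_asymptotics :
    Tendsto (fun v : ℝ =>
        (∑' h : ℕ, v ^ (2 * (h + 1)) / (1 - v ^ (2 * (h + 1)))) /
          (-Real.log (1 - v) / (2 * (1 - v))))
      (nhdsWithin 1 (Set.Ioo 0 1)) (nhds 1) := by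
  have hne := eventually_neg_log_one_sub_div_pos.mono fun _ h => h.ne'
  simp only [pow_mul]
  exact ((isEquivalent_iff_tendsto_one hne).1 lambertSeries_sq_isEquivalent).mono_left
    (nhdsWithin_mono _ Set.Ioo_subset_Iio_self)
end
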